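/- arXiv:2410.02495 — 5 statements merged into one kernel-verified Lean document; each statement's English description precedes it below -/
import Mathlib

section
/- Let (R,μ) be a non-atomic σ-finite measure space with μ(R) = ∞, let A be any Young function, and let p,q ∈ (0,∞]. Then the almost-compact embedding L^A ↪* L^{p,q} does not hold. -/
/-!
If `A(c) ≤ 1/2`, every `c·χ_F` with `μ F ≤ 2` lies in the unit ball of `L^A`, while
`(c·χ_F)^* ≥ c` on `[0, 1)` as soon as `μ F ≥ 1`, which bounds `‖c·χ_F‖_{p,q}` below by a constant
independent of `F`. Since `μ` is σ-finite with `μ(R) = ∞`, the complement of each spanning set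
has infinite measure, and non-atomicity yields inside it a set `F_n` with `1 ≤ μ F_n ≤ 2`
(by greedy exhaustion). The sets `F_n` escape every spanning set, so `χ_{F_n} → 0` pointwise,
yet `sup_{‖f‖_A ≤ 1} ‖f χ_{F_n}‖_{p,q}` stays above that constant.
-/

open MeasureTheory Filter Set ENNReal

noncomputable section

/-- A Young function: a convex, non-decreasing, left-continuous function
`A : [0,∞] → [0,∞]` with `A(0) = 0`, `A(0+) = 0` and `A(∞) = ∞`. -/
structure YoungFunction where
  toFun : ℝ≥0∞ → ℝ≥0∞
  map_zero : toFun 0 = 0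
  tendsto_zero : Filter.Tendsto toFun (nhdsWithin 0 (Set.Ioi 0)) (nhds 0)
  mono : Monotone toFun
  convex' : ∀ s t c : ℝ≥0∞, c ≤ 1 →
    toFun (c * s + (1 - c) * t) ≤ c * toFun s + (1 - c) * toFun t
  left_continuous : ∀ t : ℝ≥0∞, 0 < t → toFun t = ⨆ s ∈ Set.Iio t, toFun s
  map_top : toFun ⊤ = ⊤

/-- Left-continuous inverse of a non-decreasing function `F : [0,∞] → [0,∞]`:
`F⁻¹(t) = inf {τ ≥ 0 : F(τ) ≥ t}`. -/
def leftInvE (F : ℝ≥0∞ → ℝ≥0∞) (t : ℝ≥0∞) : ℝ≥0∞ :=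
  sInf {τ : ℝ≥0∞ | t ≤ F τ}

/-- `a` is the right-continuous derivative of the Young function `A`:
`a` is non-decreasing, right-continuous, `a(∞) = ∞`, and
`A(t) = ∫₀ᵗ a(s) ds` for all finite `t ≥ 0`. -/
def IsYoungDerivative (A : YoungFunction) (a : ℝ≥0∞ → ℝ≥0∞) : Prop :=
  Monotone a ∧ a ⊤ = ⊤ ∧
    (∀ t : ℝ≥0∞, t ≠ ⊤ → Filter.Tendsto a (nhdsWithin t (Set.Ioi t)) (nhds (a t))) ∧
    ∀ t : ℝ, 0 ≤ t →
      A.toFun (ENNReal.ofReal t) = ∫⁻ s in Set.Ioc (0:ℝ) t, a (ENNReal.ofReal s)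

/-- The Young conjugate `B̃(t) = sup {s·t − B(s) : s ∈ [0,∞]}`. -/
def youngConj (A : YoungFunction) (t : ℝ≥0∞) : ℝ≥0∞ :=
  ⨆ s : ℝ≥0∞, s * t - A.toFun s

variable {R : Type*} [MeasurableSpace R]

/-- The distribution function `f₊(λ) = μ({x : |f(x)| > λ})`. -/
def distFn (μ : Measure R) (f : R → ℝ) (lam : ℝ≥0∞) : ℝ≥0∞ :=
  μ {x | lam < ENNReal.ofReal |f x|}

/-- The non-increasing rearrangement `f*(t) = inf {λ ≥ 0 : f₊(λ) ≤ t}`. -/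
def rearr (μ : Measure R) (f : R → ℝ) (t : ℝ≥0∞) : ℝ≥0∞ :=
  sInf {lam : ℝ≥0∞ | distFn μ f lam ≤ t}

/-- The Lorentz functional `‖f‖_{p,q}` for `p, q ∈ (0,∞]`. -/
def lorentzNorm (μ : Measure R) (p q : ℝ≥0∞) (f : R → ℝ) : ℝ≥0∞ :=
  if q = ⊤ then
    ⨆ t : Set.Ioi (0:ℝ), ENNReal.ofReal t.1 ^ (p⁻¹).toReal * rearr μ f (ENNReal.ofReal t.1)
  else
    (∫⁻ t in Set.Ioi (0:ℝ),
        (ENNReal.ofReal t ^ (p⁻¹).toReal * rearr μ f (ENNReal.ofReal t)) ^ q.toReal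
          / ENNReal.ofReal t) ^ (q⁻¹).toReal

/-- The Luxemburg norm `‖f‖_A = inf {λ > 0 : ∫ A(|f|/λ) dμ ≤ 1}`. -/
def luxNorm (μ : Measure R) (A : YoungFunction) (f : R → ℝ) : ℝ≥0∞ :=
  sInf {lam : ℝ≥0∞ | 0 < lam ∧ ∫⁻ x, A.toFun (ENNReal.ofReal |f x| / lam) ∂μ ≤ 1}

/-- The measure `μ` is non-atomic: every set of positive measure has a subset
of strictly smaller positive measure. -/
def NonAtomic (μ : Measure R) : Prop :=
  ∀ s : Set R, MeasurableSet s → 0 < μ s →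
    ∃ t, t ⊆ s ∧ MeasurableSet t ∧ 0 < μ t ∧ μ t < μ s

/-- The almost-compact embedding `X ↪* Y`, for (quasi)norm functionals `NX`, `NY`:
`X ⊂ Y` and for every sequence of measurable sets `Eₙ` whose characteristic
functions tend to `0` a.e., `sup_{‖f‖_X ≤ 1} ‖f χ_{Eₙ}‖_Y → 0`. -/
def AlmostCompactEmbedding (μ : Measure R) (NX NY : (R → ℝ) → ℝ≥0∞) : Prop :=
  (∀ f : R → ℝ, Measurable f → NX f < ⊤ → NY f < ⊤) ∧
    ∀ E : ℕ → Set R, (∀ n, MeasurableSet (E n)) →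
      (∀ᵐ x ∂μ, Filter.Tendsto (fun n => (E n).indicator (fun _ => (1:ℝ)) x)
        Filter.atTop (nhds 0)) →
      Filter.Tendsto
        (fun n => ⨆ f : {f : R → ℝ // Measurable f ∧ NX f ≤ 1},
          NY ((E n).indicator f.1)) Filter.atTop (nhds 0)

/-- The continuous embedding `X ↪ Y`: there is `C > 0` with `‖f‖_Y ≤ C ‖f‖_X`. -/
def NormEmbedding (μ : Measure R) (NX NY : (R → ℝ) → ℝ≥0∞) : Prop :=
  ∃ C : ℝ, 0 < C ∧ ∀ f : R → ℝ, Measurable f → NY f ≤ ENNReal.ofReal C * NX f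

open Topology

theorem exists_subset_le_and_forall_le_two_mul (μ : Measure R) (s : Set R) {b : ℝ≥0∞}
    (hb : b ≠ ∞) : ∃ t ⊆ s, MeasurableSet t ∧ μ t ≤ b ∧
      ∀ v ⊆ s, MeasurableSet v → μ v ≤ b → μ v ≤ 2 * μ t := by
  set C := {v | v ⊆ s ∧ MeasurableSet v ∧ μ v ≤ b}
  have hC : ∀ v ∈ C, μ v ≤ ⨆ v ∈ C, μ v := fun v hv => le_biSup (fun v => μ v) hv
  have hsup_le : ⨆ v ∈ C, μ v ≤ b := iSup₂_le fun v hv => hv.2.2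
  rcases eq_or_ne (⨆ v ∈ C, μ v) 0 with h | h
  · exact ⟨∅, empty_subset _, .empty, by simp,
      fun v hvs hv hvb => (hC v ⟨hvs, hv, hvb⟩).trans (h.le.trans zero_le)⟩
  obtain ⟨t, ⟨hts, ht, htb⟩, hlt⟩ :=
    lt_biSup_iff.1 (ENNReal.half_lt_self h (ne_top_of_le_ne_top hb hsup_le))
  refine ⟨t, hts, ht, htb, fun v hvs hv hvb => (hC v ⟨hvs, hv, hvb⟩).trans ?_⟩
  rw [mul_comm, ← ENNReal.div_le_iff two_ne_zero ofNat_ne_top]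
  exact hlt.le

/-- Greedy exhaustion: adjoin to `U` a piece of `s \ U` of measure `≤ b` at least half as large
as any other such piece. The hypothesis keeps `μ U ≤ b` at every step, whereas a non-null piece
left outside all the `U`s would make every step gain at least half its measure. -/
theorem exists_subset_forall_measure_eq_zero_of_forall_notMem_Icc (μ : Measure R) {s : Set R}
    {b : ℝ≥0∞} (hb : b ≠ ∞) (H : ∀ t ⊆ s, MeasurableSet t → μ t ∉ Icc b (2 * b)) :
    ∃ W ⊆ s, MeasurableSet W ∧ μ W ≤ b ∧
      ∀ v ⊆ s \ W, MeasurableSet v → μ v ≤ b → μ v = 0 := by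
  choose next hnext_sub hnext_meas hnext_le hnext_max using
    fun U : Set R => exists_subset_le_and_forall_le_two_mul μ (s \ U) hb
  set U : ℕ → Set R := fun n => (fun V => V ∪ next V)^[n] ∅
  have hU_succ : ∀ n, U (n + 1) = U n ∪ next (U n) := fun n =>
    Function.iterate_succ_apply' _ _ _
  have hU_grow : ∀ n, μ (U (n + 1)) = μ (U n) + μ (next (U n)) := fun n => by
    rw [hU_succ, measure_union (disjoint_sdiff_right.mono_right (hnext_sub _)) (hnext_meas _)]
  have hU : ∀ n, U n ⊆ s ∧ MeasurableSet (U n) ∧ μ (U n) ≤ b := by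
    intro n
    induction n with
    | zero => simp [U]
    | succ n ih =>
      obtain ⟨hsub, hmeas, hle⟩ := ih
      have hsub' := union_subset hsub ((hnext_sub (U n)).trans sdiff_subset)
      have hmeas' := hmeas.union (hnext_meas (U n))
      have hle' : μ (U (n + 1)) ≤ 2 * b := by
        rw [hU_grow, two_mul]
        exact add_le_add hle (hnext_le _)
      rw [hU_succ] at hle' ⊢
      exact ⟨hsub', hmeas', le_of_not_ge fun hge => H _ hsub' hmeas' ⟨hge, hle'⟩⟩
  refine ⟨⋃ n, U n, iUnion_subset fun n => (hU n).1, .iUnion fun n => (hU n).2.1, ?_,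
    fun v hvs hv hvb => ?_⟩
  · rw [(monotone_nat_of_le_succ fun n => (hU_succ n).symm ▸ subset_union_left).measure_iUnion]
    exact iSup_le fun n => (hU n).2.2
  by_contra hv0
  have hv_le : ∀ n, μ v ≤ 2 * μ (next (U n)) := fun n =>
    hnext_max _ v (hvs.trans (sdiff_subset_sdiff_right (subset_iUnion U n))) hv hvb
  have hlin : ∀ n : ℕ, n * μ v ≤ 2 * μ (U n) := by
    intro n
    induction n with
    | zero => simp
    | succ n ih =>
      calc ((n + 1 : ℕ) : ℝ≥0∞) * μ v = n * μ v + μ v := by push_cast; ring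
        _ ≤ 2 * μ (U n) + 2 * μ (next (U n)) := add_le_add ih (hv_le n)
        _ = 2 * μ (U (n + 1)) := by rw [hU_grow, mul_add]
  obtain ⟨n, hn⟩ := ENNReal.exists_nat_mul_gt hv0 (ENNReal.mul_ne_top (ofNat_ne_top (n := 2)) hb)
  exact (hn.trans_le (hlin n)).not_ge (by gcongr; exact (hU n).2.2)

namespace NonAtomic

variable {μ : Measure R} {s : Set R}

theorem exists_subset_pos_two_mul_le (hna : NonAtomic μ) (hs : MeasurableSet s) (h0 : 0 < μ s) :
    ∃ t ⊆ s, MeasurableSet t ∧ 0 < μ t ∧ 2 * μ t ≤ μ s := by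
  obtain ⟨t, hts, ht, ht0, hlt⟩ := hna s hs h0
  have hsum : μ t + μ (s \ t) = μ s := by
    rw [← measure_inter_add_sdiff s ht, inter_eq_self_of_subset_right hts]
  rcases le_total (μ t) (μ (s \ t)) with hle | hle
  · exact ⟨t, hts, ht, ht0, by rw [two_mul, ← hsum]; gcongr⟩
  · refine ⟨s \ t, sdiff_subset, hs.diff ht, pos_iff_ne_zero.2 fun h => ?_, ?_⟩
    · rw [h, add_zero] at hsum
      exact hlt.ne hsum
    · rw [two_mul, ← hsum]; gcongr

theorem exists_subset_pos_lt (hna : NonAtomic μ) (hs : MeasurableSet s) (h0 : 0 < μ s)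
    (hfin : μ s ≠ ∞) {ε : ℝ≥0∞} (hε : ε ≠ 0) :
    ∃ t ⊆ s, MeasurableSet t ∧ 0 < μ t ∧ μ t < ε := by
  have iterate : ∀ n : ℕ, ∃ t ⊆ s, MeasurableSet t ∧ 0 < μ t ∧ 2 ^ n * μ t ≤ μ s := by
    intro n
    induction n with
    | zero => exact ⟨s, subset_rfl, hs, h0, by simp⟩
    | succ n ih =>
      obtain ⟨t, hts, ht, ht0, htle⟩ := ih
      obtain ⟨u, hut, hu, hu0, hule⟩ := hna.exists_subset_pos_two_mul_le ht ht0
      refine ⟨u, hut.trans hts, hu, hu0, ?_⟩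
      calc 2 ^ (n + 1) * μ u = 2 ^ n * (2 * μ u) := by ring
        _ ≤ 2 ^ n * μ t := by gcongr
        _ ≤ μ s := htle
  obtain ⟨n, hn⟩ := ENNReal.exists_nat_mul_gt hε hfin
  obtain ⟨t, hts, ht, ht0, htle⟩ := iterate n
  have hn_le : (n : ℝ≥0∞) ≤ 2 ^ n := by exact_mod_cast (Nat.lt_two_pow_self (n := n)).le
  have hlt : 2 ^ n * μ t < 2 ^ n * ε :=
    calc 2 ^ n * μ t ≤ μ s := htle
      _ < n * ε := hn
      _ ≤ 2 ^ n * ε := by gcongr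
  exact ⟨t, hts, ht, ht0, lt_of_mul_lt_mul_left hlt zero_le⟩

theorem exists_subset_measure_mem_Icc (hna : NonAtomic μ) (hs : MeasurableSet s)
    (hfin : μ s ≠ ∞) {b : ℝ≥0∞} (hb : 2 * b ≤ μ s) :
    ∃ t ⊆ s, MeasurableSet t ∧ μ t ∈ Icc b (2 * b) := by
  rcases eq_or_ne b 0 with rfl | hb0
  · exact ⟨∅, empty_subset _, .empty, by simp⟩
  have hbtop : b ≠ ∞ := by
    rintro rfl
    exact hfin (by simpa using hb)
  by_contra! H
  obtain ⟨W, -, hW, hWb, hnull⟩ :=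
    exists_subset_forall_measure_eq_zero_of_forall_notMem_Icc μ hbtop H
  have hrest : 0 < μ (s \ W) :=
    calc 0 < μ s - μ W := tsub_pos_of_lt <| hWb.trans_lt <|
          (ENNReal.lt_add_right hbtop hb0).trans_le ((two_mul b).symm.trans_le hb)
      _ ≤ μ (s \ W) := le_measure_sdiff
  obtain ⟨v, hvs, hv, hv0, hvb⟩ := hna.exists_subset_pos_lt (hs.diff hW) hrest
    (ne_top_of_le_ne_top hfin (measure_mono sdiff_subset)) hb0
  exact hv0.ne' (hnull v hvs hv hvb.le)

theorem exists_seq_measure_mem_Icc_tendsto_indicator_zero [SigmaFinite μ] (hna : NonAtomic μ)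
    (hinf : μ univ = ∞) {b : ℝ≥0∞} (hb : b ≠ ∞) :
    ∃ F : ℕ → Set R, (∀ n, MeasurableSet (F n)) ∧ (∀ n, μ (F n) ∈ Icc b (2 * b)) ∧
      ∀ x, Tendsto (fun n => (F n).indicator (fun _ => (1 : ℝ)) x) atTop (𝓝 0) := by
  have hF : ∀ n, ∃ t ⊆ (spanningSets μ n)ᶜ, MeasurableSet t ∧ μ t ∈ Icc b (2 * b) := by
    intro n
    have hS := measurableSet_spanningSets μ n
    have hcompl : 2 * b < μ (spanningSets μ n)ᶜ := by
      rw [measure_compl hS (measure_spanningSets_lt_top μ n).ne, hinf,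
        ENNReal.top_sub (measure_spanningSets_lt_top μ n).ne]
      exact ENNReal.mul_lt_top ofNat_lt_top hb.lt_top
    obtain ⟨G, hG, hGS, hGb, hGfin⟩ := μ.exists_subset_measure_lt_top hS.compl hcompl
    obtain ⟨t, htG, ht, htb⟩ := hna.exists_subset_measure_mem_Icc hG hGfin.ne hGb.le
    exact ⟨t, htG.trans hGS, ht, htb⟩
  choose F hF_sub hF_meas hF_mem using hF
  refine ⟨F, hF_meas, hF_mem, fun x => tendsto_const_nhds.congr' ?_⟩
  filter_upwards [eventually_ge_atTop (spanningSetsIndex μ x)] with n hn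
  have hx : x ∈ spanningSets μ n := monotone_spanningSets μ hn (mem_spanningSetsIndex μ x)
  rw [indicator_of_notMem fun hxF => hF_sub n hxF hx]

end NonAtomic

theorem YoungFunction.exists_pos_lt (A : YoungFunction) {ε : ℝ≥0∞} (hε : 0 < ε) :
    ∃ c : ℝ, 0 < c ∧ A.toFun (ENNReal.ofReal c) < ε := by
  have hofReal : Tendsto ENNReal.ofReal (𝓝[>] 0) (𝓝[>] 0) :=
    tendsto_nhdsWithin_of_tendsto_nhds_of_eventually_within _
      (ENNReal.continuous_ofReal.tendsto' 0 0 ENNReal.ofReal_zero |>.mono_left nhdsWithin_le_nhds)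
      (eventually_nhdsWithin_of_forall fun _ hx => ENNReal.ofReal_pos.2 hx)
  obtain ⟨c, hAc, hc⟩ :=
    (((A.tendsto_zero.comp hofReal).eventually (gt_mem_nhds hε)).and self_mem_nhdsWithin).exists
  exact ⟨c, hc, hAc⟩

section

variable {μ : Measure R}

theorem luxNorm_indicator_const_le_one (A : YoungFunction) {F : Set R} (hF : MeasurableSet F)
    {c : ℝ} (h : A.toFun (ENNReal.ofReal |c|) * μ F ≤ 1) :
    luxNorm μ A (F.indicator fun _ => c) ≤ 1 := by
  refine sInf_le ⟨one_pos, ?_⟩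
  have hA : (fun x => A.toFun (ENNReal.ofReal |F.indicator (fun _ => c) x| / 1)) =
      F.indicator fun _ => A.toFun (ENNReal.ofReal |c|) := by
    funext x
    by_cases hx : x ∈ F <;> simp [hx, A.map_zero]
  rwa [hA, lintegral_indicator_const hF]

theorem le_rearr_of_forall_mem {f : R → ℝ} {F : Set R} {c t : ℝ≥0∞}
    (hF : ∀ x ∈ F, c ≤ ENNReal.ofReal |f x|) (ht : t < μ F) : c ≤ rearr μ f t :=
  le_sInf fun _ hlam => le_of_not_gt fun hlt =>
    ht.not_ge ((measure_mono fun x hx => hlt.trans_le (hF x hx)).trans hlam)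

end

theorem exists_pos_forall_le_lorentzNorm (p q : ℝ≥0∞) {a : ℝ} (ha : 0 < a) {c : ℝ≥0∞}
    (hc : c ≠ 0) : ∃ δ > 0, ∀ (μ : Measure R) (f : R → ℝ),
      (∀ t : ℝ, 0 < t → t < a → c ≤ rearr μ f (ENNReal.ofReal t)) → δ ≤ lorentzNorm μ p q f := by
  by_cases hq : q = ⊤
  · have ha2 := half_pos ha
    refine ⟨ENNReal.ofReal (a / 2) ^ (p⁻¹).toReal * c, ENNReal.mul_pos
      (ENNReal.rpow_pos (ENNReal.ofReal_pos.2 ha2) ofReal_ne_top).ne' hc, fun μ f hf => ?_⟩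
    rw [lorentzNorm, if_pos hq]
    refine le_iSup_of_le (⟨a / 2, ha2⟩ : Ioi (0 : ℝ)) ?_
    gcongr
    exact hf _ ha2 (half_lt_self ha)
  set g : ℝ → ℝ≥0∞ := fun t => (ENNReal.ofReal t ^ (p⁻¹).toReal * c) ^ q.toReal / ENNReal.ofReal t
  have hg : Measurable g := by fun_prop
  have hg_pos : Ioo 0 a ⊆ Function.support g := fun t ht => by
    have ht0 : 0 < ENNReal.ofReal t := ENNReal.ofReal_pos.2 ht.1
    refine (ENNReal.div_pos_iff.2 ⟨(ENNReal.rpow_pos_of_nonneg ?_ toReal_nonneg).ne',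
      ofReal_ne_top⟩).ne'
    exact ENNReal.mul_pos (ENNReal.rpow_pos ht0 ofReal_ne_top).ne' hc
  refine ⟨(∫⁻ t in Ioo 0 a, g t) ^ (q⁻¹).toReal,
    ENNReal.rpow_pos_of_nonneg ((setLIntegral_pos_iff hg).2 ?_) toReal_nonneg, fun μ f hf => ?_⟩
  · rw [inter_eq_right.2 hg_pos]
    simp [ha]
  rw [lorentzNorm, if_neg hq]
  gcongr ?_ ^ _
  calc ∫⁻ t in Ioo 0 a, g t
      ≤ ∫⁻ t in Ioo 0 a, (ENNReal.ofReal t ^ (p⁻¹).toReal * rearr μ f (ENNReal.ofReal t))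
          ^ q.toReal / ENNReal.ofReal t :=
        setLIntegral_mono' measurableSet_Ioo fun t ht => by
          simp only [g]
          gcongr
          exact hf t ht.1 ht.2
    _ ≤ _ := lintegral_mono_set Ioo_subset_Ioi_self

theorem no_almost_compact_embedding_of_infinite_measure_general
    {R : Type*} [MeasurableSpace R] (μ : Measure R) [SigmaFinite μ]
    (hna : NonAtomic μ) (hinf : μ Set.univ = ⊤)
    (A : YoungFunction) (p q : ℝ≥0∞) :
    ¬ AlmostCompactEmbedding μ (luxNorm μ A) (lorentzNorm μ p q) := by
  rintro ⟨-, hACE⟩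
  obtain ⟨c, hc, hAc⟩ := A.exists_pos_lt (ε := 2⁻¹) (by simp)
  obtain ⟨F, hF_meas, hF_mem, hF_lim⟩ :=
    hna.exists_seq_measure_mem_Icc_tendsto_indicator_zero hinf one_ne_top
  obtain ⟨δ, hδ, hδ_le⟩ :=
    exists_pos_forall_le_lorentzNorm (R := R) p q one_pos (ENNReal.ofReal_pos.2 hc).ne'
  have hδ_le_sup : ∀ n, δ ≤ ⨆ f : {f : R → ℝ // Measurable f ∧ luxNorm μ A f ≤ 1},
      lorentzNorm μ p q ((F n).indicator f.1) := fun n => by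
    have hlux : luxNorm μ A ((F n).indicator fun _ => c) ≤ 1 := by
      refine luxNorm_indicator_const_le_one A (hF_meas n) ?_
      calc A.toFun (ENNReal.ofReal |c|) * μ (F n) ≤ 2⁻¹ * 2 := by
            rw [abs_of_pos hc]
            exact mul_le_mul' hAc.le ((hF_mem n).2.trans_eq (mul_one 2))
        _ = 1 := ENNReal.inv_mul_cancel two_ne_zero ofNat_ne_top
    refine le_iSup_of_le ⟨_, measurable_const.indicator (hF_meas n), hlux⟩
      (hδ_le μ _ fun t _ ht => le_rearr_of_forall_mem (fun x hx => ?_)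
        ((ENNReal.ofReal_lt_one.2 ht).trans_le (hF_mem n).1))
    simp [hx, abs_of_pos hc]
  exact hδ.not_ge (ge_of_tendsto' (hACE F hF_meas (ae_of_all μ hF_lim)) hδ_le_sup)

/-- On a non-atomic σ-finite measure space of infinite measure,
no almost-compact embedding `L^A ↪* L^{p,q}` can hold. -/
theorem no_almost_compact_embedding_of_infinite_measure
    {R : Type*} [MeasurableSpace R] (μ : Measure R) [SigmaFinite μ]
    (hna : NonAtomic μ) (hinf : μ Set.univ = ⊤)
    (A : YoungFunction) (p q : ℝ≥0∞) (hp : 0 < p) (hq : 0 < q) :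
    ¬ AlmostCompactEmbedding μ (luxNorm μ A) (lorentzNorm μ p q) :=
  no_almost_compact_embedding_of_infinite_measure_general μ hna hinf A p q
end
end

section
/- Let (R,μ) be a σ-finite measure space, let A and G be Young functions with right-continuous derivatives a and g respectively, let v : (0,∞) → [0,∞] be measurable, and let λ > 0. Then for every μ-measurable function f, ∫₀^∞ G^{-1}(f_*(t)) v(t) dt ≤ ∫₀^∞ g^{-1}(v(t)/(λ a(t))) v(t) dt + λ ∫_R A(|f|) dμ, where G^{-1} and g^{-1} denote left-continuous inverses and f_* is the distribution function of f. -/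
open MeasureTheory Filter Set ENNReal

noncomputable section

variable {R : Type*} [MeasurableSpace R]

/-! Pointwise in `t`, Young's inequality `u w ≤ g⁻¹(w) w + G(u)` with `u = G⁻¹(f₊(t))` and
`w = v(t) / (λ a(t))`, together with `G(G⁻¹(y)) ≤ y`, gives
`G⁻¹(f₊(t)) v(t) ≤ g⁻¹(v(t) / (λ a(t))) v(t) + λ a(t) f₊(t)`.
Integrating over `t` and using the layer-cake identity `∫₀^∞ a(t) f₊(t) dt = ∫ A(|f|) dμ`
gives the theorem. -/

lemma le_of_leftInvE_lt {F : ℝ≥0∞ → ℝ≥0∞} (hF : Monotone F) {w σ : ℝ≥0∞}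
    (h : leftInvE F w < σ) : w ≤ F σ := by
  obtain ⟨τ, hwτ, hτσ⟩ := sInf_lt_iff.mp h
  exact hwτ.trans (hF hτσ.le)

lemma YoungFunction.apply_leftInvE_le (G : YoungFunction) (y : ℝ≥0∞) :
    G.toFun (leftInvE G.toFun y) ≤ y := by
  rcases (zero_le : 0 ≤ leftInvE G.toFun y).eq_or_lt with h0 | hpos
  · rw [← h0, G.map_zero]
    exact zero_le
  rw [G.left_continuous _ hpos]
  refine iSup₂_le fun s hs => ?_
  by_contra! hys
  exact (sInf_le hys.le : leftInvE G.toFun y ≤ s).not_gt hs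

lemma distFn_antitone (μ : Measure R) (f : R → ℝ) : Antitone (distFn μ f) :=
  fun _ _ hst => measure_mono fun _ hx => hst.trans_lt hx

namespace IsYoungDerivative

variable {A : YoungFunction} {a : ℝ≥0∞ → ℝ≥0∞}

lemma measurable_comp_ofReal (ha : IsYoungDerivative A a) :
    Measurable fun t : ℝ => a (ENNReal.ofReal t) :=
  ha.1.measurable.comp ENNReal.measurable_ofReal

lemma sub_mul_le_apply (ha : IsYoungDerivative A a) {z u w : ℝ≥0∞} (hzu : z < u)
    (hu : u ≠ ⊤) (hw : ∀ σ, z < σ → w ≤ a σ) : (u - z) * w ≤ A.toFun u := by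
  have hz : z ≠ ⊤ := hzu.ne_top
  have hvol : (u - z) * w = ∫⁻ _ in Ioc z.toReal u.toReal, w := by
    rw [setLIntegral_const, Real.volume_Ioc, ENNReal.ofReal_sub _ ENNReal.toReal_nonneg,
      ENNReal.ofReal_toReal hu, ENNReal.ofReal_toReal hz, mul_comm]
  have hA := ha.2.2.2 u.toReal ENNReal.toReal_nonneg
  rw [ENNReal.ofReal_toReal hu] at hA
  rw [hA, hvol]
  calc ∫⁻ _ in Ioc z.toReal u.toReal, w
      ≤ ∫⁻ s in Ioc z.toReal u.toReal, a (ENNReal.ofReal s) :=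
        setLIntegral_mono ha.measurable_comp_ofReal fun s hs =>
          hw _ ((ENNReal.lt_ofReal_iff_toReal_lt hz).mpr hs.1)
    _ ≤ ∫⁻ s in Ioc 0 u.toReal, a (ENNReal.ofReal s) :=
        lintegral_mono_set (Ioc_subset_Ioc_left ENNReal.toReal_nonneg)

theorem mul_le_leftInvE_mul_add (ha : IsYoungDerivative A a) (u w : ℝ≥0∞) :
    u * w ≤ leftInvE a w * w + A.toFun u := by
  rcases eq_or_ne u ⊤ with rfl | hu
  · simp [A.map_top]
  rcases le_or_gt u (leftInvE a w) with hle | hlt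
  · exact le_add_right (mul_le_mul_left hle w)
  calc u * w = leftInvE a w * w + (u - leftInvE a w) * w := by
        rw [← add_mul, add_tsub_cancel_of_le hlt.le]
    _ ≤ leftInvE a w * w + A.toFun u :=
        add_le_add le_rfl (ha.sub_mul_le_apply hlt hu fun _ => le_of_leftInvE_lt ha.1)

lemma leftInvE_le_leftInvE_top (ha : IsYoungDerivative A a) (d : ℝ≥0∞) :
    leftInvE A.toFun d ≤ leftInvE a ⊤ := by
  refine le_of_forall_gt_imp_ge_of_dense fun τ hτ => ?_
  rcases eq_or_ne τ ⊤ with rfl | hτ_top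
  · exact le_top
  -- `a = ⊤` beyond `a⁻¹(⊤)`, so `A = ⊤` there.
  have hA : A.toFun τ = ⊤ := by
    have := ha.sub_mul_le_apply hτ hτ_top fun _ => le_of_leftInvE_lt ha.1
    rwa [ENNReal.mul_top (tsub_pos_of_lt hτ).ne', top_le_iff] at this
  exact sInf_le (show d ≤ A.toFun τ by rw [hA]; exact le_top)

lemma leftInvE_mul_le (ha : IsYoungDerivative A a) (d V L : ℝ≥0∞) :
    leftInvE A.toFun d * V ≤ leftInvE a (V / L) * V + L * d := by
  rcases eq_or_ne L 0 with rfl | hL0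
  · rcases eq_or_ne V 0 with rfl | hV
    · simp
    rw [ENNReal.div_zero hV]
    exact le_add_right (mul_le_mul_left (ha.leftInvE_le_leftInvE_top d) V)
  rcases eq_or_ne L ⊤ with rfl | hL_top
  · rcases eq_or_ne d 0 with rfl | hd
    · simp [leftInvE]
    · simp [ENNReal.top_mul hd]
  have hLV : L * (V / L) = V := ENNReal.mul_div_cancel hL0 hL_top
  calc leftInvE A.toFun d * V = L * (leftInvE A.toFun d * (V / L)) := by
        rw [mul_left_comm, hLV]
    _ ≤ L * (leftInvE a (V / L) * (V / L) + A.toFun (leftInvE A.toFun d)) :=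
        mul_le_mul_right (ha.mul_le_leftInvE_mul_add _ _) L
    _ ≤ L * (leftInvE a (V / L) * (V / L) + d) :=
        mul_le_mul_right (add_le_add le_rfl (A.apply_leftInvE_le d)) L
    _ = leftInvE a (V / L) * V + L * d := by
        rw [mul_add, mul_left_comm, hLV]

theorem lintegral_mul_distFn (ha : IsYoungDerivative A a) (μ : Measure R) [SFinite μ]
    {f : R → ℝ} (hf : Measurable f) :
    ∫⁻ t in Ioi (0:ℝ), a (ENNReal.ofReal t) * distFn μ f (ENNReal.ofReal t) =
      ∫⁻ x, A.toFun (ENNReal.ofReal |f x|) ∂μ := by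
  set F : ℝ → R → ℝ≥0∞ := fun t x => (Iio |f x|).indicator (fun s => a (ENNReal.ofReal s)) t
  have hF : Measurable (Function.uncurry F) :=
    (ha.measurable_comp_ofReal.comp measurable_fst).indicator
      (measurableSet_lt measurable_fst (hf.abs.comp measurable_snd))
  have h_inner : ∀ t ∈ Ioi (0:ℝ),
      a (ENNReal.ofReal t) * distFn μ f (ENNReal.ofReal t) = ∫⁻ x, F t x ∂μ := by
    intro t ht
    have hset : {x | ENNReal.ofReal t < ENNReal.ofReal |f x|} = {x | t < |f x|} := by
      ext x
      exact ENNReal.ofReal_lt_ofReal_iff_of_nonneg (le_of_lt ht)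
    have hFt : (fun x => F t x) = {x | t < |f x|}.indicator fun _ => a (ENNReal.ofReal t) := by
      ext x
      simp [F, indicator_apply]
    rw [hFt, lintegral_indicator_const (measurableSet_lt measurable_const hf.abs), distFn, hset]
  have h_outer : ∀ x, ∫⁻ t in Ioi (0:ℝ), F t x = A.toFun (ENNReal.ofReal |f x|) := by
    intro x
    rw [lintegral_indicator measurableSet_Iio, Measure.restrict_restrict measurableSet_Iio,
      Iio_inter_Ioi, Measure.restrict_congr_set Ioo_ae_eq_Ioc, ha.2.2.2 |f x| (abs_nonneg _)]
  rw [setLIntegral_congr_fun measurableSet_Ioi h_inner, lintegral_lintegral_swap hF.aemeasurable]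
  simp_rw [h_outer]

end IsYoungDerivative

theorem young_type_inequality_general
    {R : Type*} [MeasurableSpace R] (μ : Measure R) [SigmaFinite μ]
    (A G : YoungFunction) (a g : ℝ≥0∞ → ℝ≥0∞)
    (ha : IsYoungDerivative A a) (hg : IsYoungDerivative G g)
    (v : ℝ → ℝ≥0∞) (lam : ℝ)
    (f : R → ℝ) (hf : Measurable f) :
    ∫⁻ t in Set.Ioi (0:ℝ), leftInvE G.toFun (distFn μ f (ENNReal.ofReal t)) * v t ≤
      (∫⁻ t in Set.Ioi (0:ℝ),
        leftInvE g (v t / (ENNReal.ofReal lam * a (ENNReal.ofReal t))) * v t)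
        + ENNReal.ofReal lam * ∫⁻ x, A.toFun (ENNReal.ofReal |f x|) ∂μ := by
  set L : ℝ → ℝ≥0∞ := fun t => ENNReal.ofReal lam * a (ENNReal.ofReal t)
  have hdist : Measurable fun t : ℝ => distFn μ f (ENNReal.ofReal t) :=
    ((distFn_antitone μ f).comp_monotone ENNReal.ofReal_mono).measurable
  have hLdist : Measurable fun t => L t * distFn μ f (ENNReal.ofReal t) :=
    (measurable_const.mul ha.measurable_comp_ofReal).mul hdist
  calc ∫⁻ t in Ioi (0:ℝ), leftInvE G.toFun (distFn μ f (ENNReal.ofReal t)) * v t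
      ≤ ∫⁻ t in Ioi (0:ℝ),
          (leftInvE g (v t / L t) * v t + L t * distFn μ f (ENNReal.ofReal t)) :=
        lintegral_mono fun t => hg.leftInvE_mul_le _ _ _
    _ = (∫⁻ t in Ioi (0:ℝ), leftInvE g (v t / L t) * v t) +
          ENNReal.ofReal lam *
            ∫⁻ t in Ioi (0:ℝ), a (ENNReal.ofReal t) * distFn μ f (ENNReal.ofReal t) := by
        rw [lintegral_add_right _ hLdist,
          ← lintegral_const_mul' _ _ ENNReal.ofReal_ne_top]
        simp_rw [L, mul_assoc]
    _ = _ := by rw [ha.lintegral_mul_distFn μ hf]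

/-- A Young-type inequality: for Young functions `A`, `G` with
right-continuous derivatives `a`, `g`, a measurable weight `v` and `λ > 0`,
`∫₀^∞ G⁻¹(f₊(t)) v(t) dt ≤ ∫₀^∞ g⁻¹(v(t)/(λ a(t))) v(t) dt + λ ∫ A(|f|) dμ`. -/
theorem young_type_inequality
    {R : Type*} [MeasurableSpace R] (μ : Measure R) [SigmaFinite μ]
    (A G : YoungFunction) (a g : ℝ≥0∞ → ℝ≥0∞)
    (ha : IsYoungDerivative A a) (hg : IsYoungDerivative G g)
    (v : ℝ → ℝ≥0∞) (hv : Measurable v) (lam : ℝ) (hlam : 0 < lam)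
    (f : R → ℝ) (hf : Measurable f) :
    ∫⁻ t in Set.Ioi (0:ℝ), leftInvE G.toFun (distFn μ f (ENNReal.ofReal t)) * v t ≤
      (∫⁻ t in Set.Ioi (0:ℝ),
        leftInvE g (v t / (ENNReal.ofReal lam * a (ENNReal.ofReal t))) * v t)
        + ENNReal.ofReal lam * ∫⁻ x, A.toFun (ENNReal.ofReal |f x|) ∂μ :=
  young_type_inequality_general μ A G a g ha hg v lam f hf
end
end

section
/- Let A be a Young function attaining only finite values on [0,∞), and let 1 ≤ q < p < ∞. If ∫_c^∞ (t^p / A(t))^{q/(p−q)} dt/t < ∞ for some c > 0, then lim_{t→∞} t^p / A(t) = 0. -/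
open MeasureTheory Filter Set ENNReal

noncomputable section

variable {R : Type*} [MeasurableSpace R]

/-!
Convexity and `A 0 = 0` make `A t / t` non-decreasing, so for `t/2 < s ≤ t` one has
`t^p / A t ≤ 2^(p-1) s^p / A s`. Integrating the `r`-th power of this over `(t/2, t]` against
`ds/s`, with `r = q/(p-q)`, bounds `(t^p / A t)^r` by a constant times the tail
`∫_{t/2}^∞ (s^p / A s)^r ds/s` of the convergent integral, which tends to `0`.
-/

theorem ENNReal.rpow_div_eq_rpow_sub_one_div {x : ℝ≥0∞} (hx0 : x ≠ 0) (hx : x ≠ ⊤) (p : ℝ)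
    (y : ℝ≥0∞) : x ^ p / y = x ^ (p - 1) / (y / x) := by
  rw [div_eq_mul_inv, div_eq_mul_inv, div_eq_mul_inv,
    ENNReal.mul_inv (.inr (ENNReal.inv_ne_top.2 hx0)) (.inr (ENNReal.inv_ne_zero.2 hx)),
    inv_inv, mul_comm y⁻¹, ← mul_assoc]
  congr 1
  simpa using ENNReal.rpow_add (p - 1) 1 hx0 hx

theorem ENNReal.tendsto_nhds_zero_of_rpow {α : Type*} {l : Filter α} {f : α → ℝ≥0∞} {r : ℝ}
    (hr : 0 < r) (h : Tendsto (fun x => f x ^ r) l (nhds 0)) : Tendsto f l (nhds 0) := by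
  simpa [← ENNReal.rpow_mul, mul_inv_cancel₀ hr.ne', ENNReal.zero_rpow_of_pos (inv_pos.2 hr)]
    using h.ennrpow_const r⁻¹

theorem tendsto_setLIntegral_Ioi_atTop_zero {μ : Measure ℝ} {f : ℝ → ℝ≥0∞} {c : ℝ}
    (h : ∫⁻ x in Ioi c, f x ∂μ ≠ ⊤) :
    Tendsto (fun u => ∫⁻ x in Ioi u, f x ∂μ) atTop (nhds 0) := by
  set ν := (μ.restrict (Ioi c)).withDensity f
  have hν : ∀ u, c ≤ u → ν (Ioi u) = ∫⁻ x in Ioi u, f x ∂μ := fun u hu => by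
    rw [withDensity_apply _ measurableSet_Ioi, Measure.restrict_restrict measurableSet_Ioi,
      inter_eq_self_of_subset_left (Ioi_subset_Ioi hu)]
  have hνc : ν (Ioi c) ≠ ⊤ := by rwa [hν c le_rfl]
  have hlim : Tendsto (fun u => ν (Ioi u)) atTop (nhds (ν (⋂ u : ℝ, Ioi u))) :=
    tendsto_measure_iInter_atTop (fun _ => measurableSet_Ioi.nullMeasurableSet)
      (fun _ _ huv => Ioi_subset_Ioi huv) ⟨c, hνc⟩
  rw [show ⋂ u : ℝ, Ioi u = ∅ from iInter_eq_empty_iff.2 fun x => ⟨x, lt_irrefl x⟩,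
    measure_empty] at hlim
  exact hlim.congr' (eventually_ge_atTop c |>.mono hν)

namespace YoungFunction

variable (A : YoungFunction)

theorem map_mul_le {c : ℝ≥0∞} (hc : c ≤ 1) (x : ℝ≥0∞) : A.toFun (c * x) ≤ c * A.toFun x := by
  simpa [A.map_zero] using A.convex' x 0 c hc

theorem monotoneOn_div_self : MonotoneOn (fun t => A.toFun t / t) (Iio ⊤) := by
  intro s _ t ht hst
  rcases eq_or_ne s 0 with rfl | hs
  · simp [A.map_zero]
  have ht0 : t ≠ 0 := (pos_of_ne_zero hs |>.trans_le hst).ne'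
  calc A.toFun s / s = A.toFun (s / t * t) / s := by rw [ENNReal.div_mul_cancel ht0 ht.ne]
    _ ≤ s / t * A.toFun t / s := by
      gcongr
      exact A.map_mul_le (ENNReal.div_le_of_le_mul (by simpa using hst)) t
    _ = A.toFun t / t := by
      rw [div_eq_mul_inv, div_eq_mul_inv, div_eq_mul_inv, mul_right_comm, mul_right_comm s,
        ENNReal.mul_inv_cancel hs (ne_top_of_le_ne_top ht.ne hst), one_mul, mul_comm]

theorem rpow_div_le_two_rpow_mul {p : ℝ} (hp : 1 ≤ p) {s t : ℝ≥0∞} (hs : s ≠ 0) (hst : s ≤ t)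
    (ht2 : t ≤ 2 * s) (ht : t ≠ ⊤) :
    t ^ p / A.toFun t ≤ 2 ^ (p - 1) * (s ^ p / A.toFun s) := by
  have hs_top : s ≠ ⊤ := ne_top_of_le_ne_top ht hst
  rw [ENNReal.rpow_div_eq_rpow_sub_one_div (pos_of_ne_zero hs |>.trans_le hst).ne' ht,
    ENNReal.rpow_div_eq_rpow_sub_one_div hs hs_top, ← mul_div_assoc,
    ← ENNReal.mul_rpow_of_nonneg _ _ (sub_nonneg.2 hp)]
  exact ENNReal.div_le_div (ENNReal.rpow_le_rpow ht2 (sub_nonneg.2 hp))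
    (A.monotoneOn_div_self hs_top.lt_top ht.lt_top hst)

theorem rpow_div_rpow_le_setLIntegral_Ioi {p r : ℝ} (hp : 1 ≤ p) (hr : 0 ≤ r) {t : ℝ}
    (ht : 0 < t) :
    (ENNReal.ofReal t ^ p / A.toFun (ENNReal.ofReal t)) ^ r ≤
      2 * 2 ^ ((p - 1) * r) * ∫⁻ s in Ioi (t / 2),
        (ENNReal.ofReal s ^ p / A.toFun (ENNReal.ofReal s)) ^ r / ENNReal.ofReal s := by
  set φ : ℝ → ℝ≥0∞ := fun s => ENNReal.ofReal s ^ p / A.toFun (ENNReal.ofReal s)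
  set K : ℝ≥0∞ := 2 ^ ((p - 1) * r)
  have hT0 : ENNReal.ofReal t ≠ 0 := (ENNReal.ofReal_pos.2 ht).ne'
  have hpoint : ∀ s ∈ Ioc (t / 2) t,
      φ t ^ r / ENNReal.ofReal t ≤ K * (φ s ^ r / ENNReal.ofReal s) := by
    rintro s ⟨hts, hst⟩
    have hφ : φ t ≤ 2 ^ (p - 1) * φ s := by
      refine A.rpow_div_le_two_rpow_mul hp (ENNReal.ofReal_pos.2 (by linarith)).ne'
        (ENNReal.ofReal_le_ofReal hst) ?_ ENNReal.ofReal_ne_top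
      rw [← ENNReal.ofReal_ofNat 2, ← ENNReal.ofReal_mul zero_le_two]
      exact ENNReal.ofReal_le_ofReal (by linarith)
    calc φ t ^ r / ENNReal.ofReal t ≤ (2 ^ (p - 1) * φ s) ^ r / ENNReal.ofReal s := by
          gcongr
      _ = K * (φ s ^ r / ENNReal.ofReal s) := by
          rw [ENNReal.mul_rpow_of_nonneg _ _ hr, ← ENNReal.rpow_mul, mul_div_assoc]
  calc φ t ^ r = φ t ^ r / ENNReal.ofReal t * (ENNReal.ofReal t / 2) * 2 := by
        rw [mul_assoc, ENNReal.div_mul_cancel two_ne_zero ENNReal.ofNat_ne_top,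
          ENNReal.div_mul_cancel hT0 ENNReal.ofReal_ne_top]
    _ = (∫⁻ _ in Ioc (t / 2) t, φ t ^ r / ENNReal.ofReal t) * 2 := by
        rw [setLIntegral_const, Real.volume_Ioc, show t - t / 2 = t / 2 by ring,
          ENNReal.ofReal_div_of_pos two_pos, ENNReal.ofReal_ofNat]
    _ ≤ (∫⁻ s in Ioc (t / 2) t, K * (φ s ^ r / ENNReal.ofReal s)) * 2 := by
        gcongr ?_ * 2
        exact setLIntegral_mono' measurableSet_Ioc hpoint
    _ ≤ (∫⁻ s in Ioi (t / 2), K * (φ s ^ r / ENNReal.ofReal s)) * 2 := by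
        gcongr ?_ * 2
        exact lintegral_mono_set Ioc_subset_Ioi_self
    _ = 2 * K * ∫⁻ s in Ioi (t / 2), φ s ^ r / ENNReal.ofReal s := by
        rw [lintegral_const_mul' _ _ (by simp [K]), mul_comm, mul_assoc]

end YoungFunction

theorem tendsto_rpow_div_young_of_integral_general
    (A : YoungFunction)
    (p q : ℝ) (hq : 1 ≤ q) (hqp : q < p)
    (h : ∃ c : ℝ, 0 < c ∧
      ∫⁻ t in Set.Ioi c,
        (ENNReal.ofReal t ^ p / A.toFun (ENNReal.ofReal t)) ^ (q / (p - q))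
          / ENNReal.ofReal t < ⊤) :
    Filter.Tendsto (fun t : ℝ => ENNReal.ofReal t ^ p / A.toFun (ENNReal.ofReal t))
      Filter.atTop (nhds 0) := by
  obtain ⟨c, -, hint⟩ := h
  set r := q / (p - q)
  have hr : 0 < r := div_pos (by linarith) (by linarith)
  have hK : (2 * 2 ^ ((p - 1) * r) : ℝ≥0∞) ≠ ⊤ := ENNReal.mul_ne_top ENNReal.ofNat_ne_top
    (ENNReal.rpow_ne_top_of_nonneg (mul_nonneg (by linarith) hr.le) ENNReal.ofNat_ne_top)
  have htail := (tendsto_setLIntegral_Ioi_atTop_zero hint.ne).comp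
    (tendsto_id.atTop_div_const two_pos)
  refine ENNReal.tendsto_nhds_zero_of_rpow hr ?_
  refine tendsto_of_tendsto_of_tendsto_of_le_of_le' tendsto_const_nhds
    (by simpa using ENNReal.Tendsto.const_mul htail (.inr hK)) (.of_forall fun _ => zero_le) ?_
  filter_upwards [eventually_gt_atTop 0] with t ht
  exact A.rpow_div_rpow_le_setLIntegral_Ioi (by linarith) hr.le ht

/-- If `A` is a finite-valued Young function, `1 ≤ q < p < ∞`,
and `∫_c^∞ (t^p/A(t))^{q/(p-q)} dt/t < ∞` for some `c > 0`,
then `lim_{t→∞} t^p/A(t) = 0`. -/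
theorem tendsto_rpow_div_young_of_integral
    (A : YoungFunction) (hfin : ∀ t : ℝ≥0∞, t ≠ ⊤ → A.toFun t ≠ ⊤)
    (p q : ℝ) (hq : 1 ≤ q) (hqp : q < p)
    (h : ∃ c : ℝ, 0 < c ∧
      ∫⁻ t in Set.Ioi c,
        (ENNReal.ofReal t ^ p / A.toFun (ENNReal.ofReal t)) ^ (q / (p - q))
          / ENNReal.ofReal t < ⊤) :
    Filter.Tendsto (fun t : ℝ => ENNReal.ofReal t ^ p / A.toFun (ENNReal.ofReal t))
      Filter.atTop (nhds 0) :=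
  tendsto_rpow_div_young_of_integral_general A p q hq hqp h
end
end

section
/- Let 1 ≤ q < p < ∞ and let a : [0,∞) → [0,∞) be non-decreasing and continuous with a(t) > 0 for all sufficiently large t and lim_{t→∞} t^{p−1}/a(t) = 0. Define η(t) = sup_{s ∈ [t,∞)} s^{q−1}/a(s) for t ∈ [0,∞), and let η^{-1}(τ) = sup{σ ≥ 0 : η(σ) ≥ τ} be the left-continuous inverse of the non-increasing function η. Then lim_{τ→0+} τ^{q/(p−q)} · η^{-1}(τ)^q = 0. -/
open MeasureTheory Filter Set ENNReal

noncomputable section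

variable {R : Type*} [MeasurableSpace R]

/-- The function `η(t) = sup_{s ∈ [t,∞)} s^{q-1}/a(s)`, valued in `[0,∞]`. -/
def etaSup (a : ℝ → ℝ) (q : ℝ) (t : ℝ) : ℝ≥0∞ :=
  ⨆ s : Set.Ici t, ENNReal.ofReal (s.1 ^ (q - 1)) / ENNReal.ofReal (a s.1)

/-- The left-continuous inverse `η⁻¹(τ) = sup {σ ≥ 0 : η(σ) ≥ τ}` of the
non-increasing function `η`, valued in `[0,∞]`. -/
def etaInv (η : ℝ → ℝ≥0∞) (τ : ℝ≥0∞) : ℝ≥0∞ :=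
  sSup ((fun s : ℝ => ENNReal.ofReal s) '' {σ : ℝ | 0 ≤ σ ∧ τ ≤ η σ})

/-- Let `1 ≤ q < p < ∞` and let `a : [0,∞) → [0,∞)` be
non-decreasing, continuous, eventually positive, with `lim_{t→∞} t^{p-1}/a(t) = 0`.
With `η(t) = sup_{s ≥ t} s^{q-1}/a(s)`, one has `lim_{τ→0+} τ^{q/(p-q)} η⁻¹(τ)^q = 0`. -/
theorem tendsto_etaInv_zero
    (p q : ℝ) (hq : 1 ≤ q) (hqp : q < p)
    (a : ℝ → ℝ) (hmono : MonotoneOn a (Set.Ici 0))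
    (hcont : ContinuousOn a (Set.Ici 0))
    (hnn : ∀ t ∈ Set.Ici (0:ℝ), 0 ≤ a t)
    (hppos : ∀ᶠ t in Filter.atTop, 0 < a t)
    (hlim : Filter.Tendsto (fun t : ℝ => t ^ (p - 1) / a t) Filter.atTop (nhds 0)) :
    Filter.Tendsto
      (fun τ : ℝ => ENNReal.ofReal τ ^ (q / (p - q)) *
        etaInv (etaSup a q) (ENNReal.ofReal τ) ^ q)
      (nhdsWithin 0 (Set.Ioi 0)) (nhds 0) := by
  have hpq : (0:ℝ) < p - q := by linarith
  set e : ℝ := q / (p - q) with he_def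
  have he : 0 < e := div_pos (by linarith) hpq
  rw [ENNReal.tendsto_nhds_zero]
  intro ε hε
  set c : ℝ≥0∞ := min ε 1 with hc_def
  have hc0 : 0 < c := lt_min hε zero_lt_one
  have hcT : c ≠ ⊤ := ne_top_of_le_ne_top one_ne_top (min_le_right _ _)
  have hcε : c ≤ ε := min_le_left _ _
  have hcR : 0 < c.toReal := ENNReal.toReal_pos hc0.ne' hcT
  set δ : ℝ := (c.toReal / 2) ^ e⁻¹ with hδ_def
  have hδ : 0 < δ := Real.rpow_pos_of_pos (by linarith) _
  have hδe : δ ^ e = c.toReal / 2 := Real.rpow_inv_rpow (by linarith) he.ne'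
  obtain ⟨T, hT⟩ := Filter.eventually_atTop.mp
    (((hlim.eventually (eventually_le_nhds hδ)).and
      (hppos.and (Filter.eventually_ge_atTop 1))))
  have hT1 : 1 ≤ T := (hT T le_rfl).2.2
  have hTq : 0 < T ^ q := Real.rpow_pos_of_pos (by linarith) _
  set τ1 : ℝ := (c.toReal / (2 * T ^ q)) ^ e⁻¹ with hτ1_def
  have hτ1 : 0 < τ1 := Real.rpow_pos_of_pos (by positivity) _
  have hτ1e : τ1 ^ e = c.toReal / (2 * T ^ q) :=
    Real.rpow_inv_rpow (by positivity) he.ne'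
  filter_upwards [Ioo_mem_nhdsGT_of_mem (Set.left_mem_Ico.mpr hτ1)] with τ hτ
  obtain ⟨hτ0, hττ1⟩ := hτ
  set X : ℝ := (δ / τ) ^ (p - q)⁻¹ with hX_def
  have hXnn : 0 ≤ X := Real.rpow_nonneg (by positivity) _
  have hMnn : 0 ≤ max T X := le_trans (by linarith) (le_max_left _ _)
  -- key bound on etaInv
  have hbound : etaInv (etaSup a q) (ENNReal.ofReal τ) ≤ ENNReal.ofReal (max T X) := by
    apply sSup_le
    rintro x ⟨σ, ⟨hσ0, hση⟩, rfl⟩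
    apply ENNReal.ofReal_le_ofReal
    rcases le_or_gt σ T with h | hσT
    · exact le_trans h (le_max_left _ _)
    · have hσpos : 0 < σ := lt_of_lt_of_le (by linarith) hσT.le
      refine le_trans ?_ (le_max_right _ _)
      -- etaSup a q σ ≤ ofReal (δ * σ ^ (q - p))
      have hsup : etaSup a q σ ≤ ENNReal.ofReal (δ * σ ^ (q - p)) := by
        apply iSup_le
        rintro ⟨s, hs⟩
        have hsT : T ≤ s := le_trans hσT.le hs
        obtain ⟨hsδ, has, hs1⟩ := hT s hsT
        have hs0 : (0:ℝ) < s := by linarith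
        rw [← ENNReal.ofReal_div_of_pos has]
        apply ENNReal.ofReal_le_ofReal
        have h1 : s ^ (q - 1) = s ^ (p - 1) * s ^ (q - p) := by
          rw [← Real.rpow_add hs0]; ring_nf
        have h2 : s ^ (q - 1) / a s = (s ^ (p - 1) / a s) * s ^ (q - p) := by
          rw [h1]; ring
        rw [h2]
        calc (s ^ (p - 1) / a s) * s ^ (q - p)
            ≤ δ * s ^ (q - p) :=
              mul_le_mul_of_nonneg_right hsδ (Real.rpow_nonneg hs0.le _)
          _ ≤ δ * σ ^ (q - p) :=
              mul_le_mul_of_nonneg_left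
                (Real.rpow_le_rpow_of_nonpos hσpos hs (by linarith)) hδ.le
      have hτle : τ ≤ δ * σ ^ (q - p) :=
        (ENNReal.ofReal_le_ofReal_iff (by positivity)).mp (hση.trans hsup)
      have hσpq : 0 < σ ^ (p - q) := Real.rpow_pos_of_pos hσpos _
      have hinv : σ ^ (q - p) = (σ ^ (p - q))⁻¹ := by
        rw [show q - p = -(p - q) by ring, Real.rpow_neg hσpos.le]
      have hτle' : τ ≤ δ / σ ^ (p - q) := by
        rw [div_eq_mul_inv, ← hinv]; exact hτle
      have h3 : σ ^ (p - q) ≤ δ / τ := by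
        rw [le_div_iff₀ hτ0]
        have := (le_div_iff₀ hσpq).mp hτle'
        linarith
      calc σ = (σ ^ (p - q)) ^ (p - q)⁻¹ := (Real.rpow_rpow_inv hσpos.le hpq.ne').symm
        _ ≤ X := Real.rpow_le_rpow hσpq.le h3 (by positivity)
  -- finish
  have hq0 : (0:ℝ) ≤ q := by linarith
  calc ENNReal.ofReal τ ^ e * etaInv (etaSup a q) (ENNReal.ofReal τ) ^ q
      ≤ ENNReal.ofReal τ ^ e * ENNReal.ofReal (max T X) ^ q :=
        mul_le_mul_right (ENNReal.rpow_le_rpow hbound hq0) _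
    _ = ENNReal.ofReal (τ ^ e * (max T X) ^ q) := by
        rw [ENNReal.ofReal_rpow_of_nonneg hτ0.le he.le,
          ENNReal.ofReal_rpow_of_nonneg hMnn hq0,
          ← ENNReal.ofReal_mul (Real.rpow_nonneg hτ0.le _)]
    _ ≤ c := by
        rw [← ENNReal.ofReal_toReal hcT]
        apply ENNReal.ofReal_le_ofReal
        rcases max_cases T X with ⟨hM, _⟩ | ⟨hM, _⟩ <;> rw [hM]
        · -- τ^e * T^q ≤ c/2
          have h4 : τ ^ e ≤ τ1 ^ e := Real.rpow_le_rpow hτ0.le hττ1.le he.le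
          have : τ ^ e * T ^ q ≤ τ1 ^ e * T ^ q :=
            mul_le_mul_of_nonneg_right h4 hTq.le
          rw [hτ1e] at this
          have h5 : c.toReal / (2 * T ^ q) * T ^ q = c.toReal / 2 := by
            field_simp
          rw [h5] at this
          linarith
        · -- τ^e * X^q = δ^e = c/2
          have h4 : X ^ q = (δ / τ) ^ e := by
            rw [hX_def, ← Real.rpow_mul (by positivity)]
            congr 1
            rw [he_def, inv_mul_eq_div]
          have h5 : τ * (δ / τ) = δ := by field_simp
          rw [h4, ← Real.mul_rpow hτ0.le (by positivity), h5, hδe]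
          linarith
    _ ≤ ε := hcε
end
end

section
/- Let (R,μ) be a non-atomic measure space with 0 < μ(R) < ∞, and let p ∈ (0,1) and q ∈ (0,∞]. Then the almost-compact embedding L^1 ↪* L^{p,q} holds, where L^1 is the Lebesgue space with norm ‖f‖_1 = ∫_R |f| dμ. -/
open MeasureTheory Filter Set ENNReal

noncomputable section

variable {R : Type*} [MeasurableSpace R]

/-! Chebyshev's inequality gives `f*(t) ≤ ‖f‖₁ / t`, and `f*` vanishes from `μ(supp f)` on.
Since `1/p > 1`, the weight `t^{1/p - 1}` is integrable near `0` against `dt/t` after raising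
to any power `q`, so `‖f‖_{p,q} ≤ C ‖f‖₁ μ(supp f)^{1/p - 1}`. For `f χ_{Eₙ}` with `‖f‖₁ ≤ 1`
the support has measure at most `μ(Eₙ)`, which tends to `0` by dominated convergence because
`μ` is finite. -/

theorem lintegral_Ioc_ofReal_rpow_sub_one {a T : ℝ} (ha : 0 < a) (hT : 0 ≤ T) :
    ∫⁻ t in Ioc 0 T, ENNReal.ofReal t ^ (a - 1) = ENNReal.ofReal (T ^ a / a) := by
  have hint : IntegrableOn (fun t : ℝ => t ^ (a - 1)) (Ioc 0 T) :=
    (intervalIntegrable_iff_integrableOn_Ioc_of_le hT).mp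
      (intervalIntegral.intervalIntegrable_rpow' (by linarith))
  rw [setLIntegral_congr_fun measurableSet_Ioc fun t ht => ENNReal.ofReal_rpow_of_pos ht.1,
    ← ofReal_integral_eq_lintegral_ofReal hint
      ((ae_restrict_iff' measurableSet_Ioc).mpr
        (ae_of_all _ fun t ht => Real.rpow_nonneg ht.1.le _)),
    ← intervalIntegral.integral_of_le hT, integral_rpow (Or.inl (by linarith)),
    sub_add_cancel, Real.zero_rpow ha.ne', sub_zero]

theorem one_lt_toReal_inv {p : ℝ≥0∞} (hp0 : 0 < p) (hp1 : p < 1) : 1 < (p⁻¹).toReal := by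
  rw [← ENNReal.toReal_one,
    ENNReal.toReal_lt_toReal one_ne_top (ENNReal.inv_ne_top.mpr hp0.ne')]
  exact ENNReal.one_lt_inv.mpr hp1

section Rearrangement

variable (μ : Measure R) {f : R → ℝ}

theorem rearr_le_of_distFn_le {lam t : ℝ≥0∞} (h : distFn μ f lam ≤ t) : rearr μ f t ≤ lam :=
  sInf_le h

theorem rearr_eq_zero_of_distFn_zero_le {t : ℝ≥0∞} (h : distFn μ f 0 ≤ t) : rearr μ f t = 0 :=
  nonpos_iff_eq_zero.mp (rearr_le_of_distFn_le μ h)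

theorem mul_distFn_le_lintegral (hf : Measurable f) (lam : ℝ≥0∞) :
    lam * distFn μ f lam ≤ ∫⁻ x, ENNReal.ofReal |f x| ∂μ :=
  calc lam * distFn μ f lam ≤ lam * μ {x | lam ≤ ENNReal.ofReal |f x|} := by
        gcongr; exact measure_mono fun x (hx : lam < _) => hx.le
    _ ≤ ∫⁻ x, ENNReal.ofReal |f x| ∂μ := mul_meas_ge_le_lintegral₀ (by fun_prop) lam

theorem rearr_le_lintegral_div (hf : Measurable f) {t : ℝ≥0∞} (ht : t ≠ 0) :
    rearr μ f t ≤ (∫⁻ x, ENNReal.ofReal |f x| ∂μ) / t := by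
  rcases eq_or_ne t ⊤ with rfl | htop
  · exact rearr_le_of_distFn_le μ le_top
  refine le_of_forall_gt_imp_ge_of_dense fun c hc => rearr_le_of_distFn_le μ ?_
  rw [ENNReal.div_lt_iff (.inl ht) (.inl htop)] at hc
  exact (lt_of_mul_lt_mul_left' ((mul_distFn_le_lintegral μ hf c).trans_lt hc)).le

theorem rpow_mul_rearr_le (hf : Measurable f) (r : ℝ) {t : ℝ≥0∞} (ht : t ≠ 0) (htop : t ≠ ⊤) :
    t ^ r * rearr μ f t ≤ (∫⁻ x, ENNReal.ofReal |f x| ∂μ) * t ^ (r - 1) :=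
  calc t ^ r * rearr μ f t ≤ t ^ r * ((∫⁻ x, ENNReal.ofReal |f x| ∂μ) / t) := by
        gcongr; exact rearr_le_lintegral_div μ hf ht
    _ = (∫⁻ x, ENNReal.ofReal |f x| ∂μ) * t ^ (r - 1) := by
        rw [ENNReal.rpow_sub _ _ ht htop, ENNReal.rpow_one, ENNReal.div_eq_inv_mul,
          ENNReal.div_eq_inv_mul]
        ring

end Rearrangement

section Lorentz

variable (μ : Measure R) {f : R → ℝ} {p : ℝ≥0∞}

theorem lorentzNorm_top_le (hf : Measurable f) (hp0 : 0 < p) (hp1 : p ≤ 1) :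
    lorentzNorm μ p ⊤ f ≤
      (∫⁻ x, ENNReal.ofReal |f x| ∂μ) * distFn μ f 0 ^ ((p⁻¹).toReal - 1) := by
  have hr : 0 ≤ (p⁻¹).toReal - 1 := by
    rw [sub_nonneg, ← ENNReal.toReal_one,
      ENNReal.toReal_le_toReal one_ne_top (ENNReal.inv_ne_top.mpr hp0.ne')]
    exact ENNReal.one_le_inv.mpr hp1
  rw [lorentzNorm, if_pos rfl]
  refine iSup_le fun t => ?_
  have ht0 : ENNReal.ofReal t.1 ≠ 0 := (ENNReal.ofReal_pos.mpr t.2).ne'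
  rcases le_or_gt (distFn μ f 0) (ENNReal.ofReal t.1) with hm | hm
  · rw [rearr_eq_zero_of_distFn_zero_le μ hm, mul_zero]
    exact zero_le
  · calc _ ≤ (∫⁻ x, ENNReal.ofReal |f x| ∂μ) * ENNReal.ofReal t.1 ^ ((p⁻¹).toReal - 1) :=
          rpow_mul_rearr_le μ hf _ ht0 ofReal_ne_top
      _ ≤ _ := by gcongr

theorem lorentzNorm_le_of_ne_top (hf : Measurable f) (hp0 : 0 < p) (hp1 : p < 1) {q : ℝ≥0∞}
    (hq0 : 0 < q) (hq : q ≠ ⊤) (hm : distFn μ f 0 ≠ ⊤) :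
    lorentzNorm μ p q f ≤ ENNReal.ofReal (1 / (((p⁻¹).toReal - 1) * q.toReal)) ^ q.toReal⁻¹ *
      ((∫⁻ x, ENNReal.ofReal |f x| ∂μ) * distFn μ f 0 ^ ((p⁻¹).toReal - 1)) := by
  set r := (p⁻¹).toReal
  set Q := q.toReal
  set N := ∫⁻ x, ENNReal.ofReal |f x| ∂μ
  set m := distFn μ f 0
  set a := (r - 1) * Q
  have hQ : 0 < Q := ENNReal.toReal_pos hq0.ne' hq
  have ha : 0 < a := mul_pos (by linarith [one_lt_toReal_inv hp0 hp1]) hQ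
  have hT : 0 ≤ m.toReal := ENNReal.toReal_nonneg
  have hbound : ∀ t ∈ Ioi (0 : ℝ),
      (ENNReal.ofReal t ^ r * rearr μ f (ENNReal.ofReal t)) ^ Q / ENNReal.ofReal t ≤
        (Ioc 0 m.toReal).indicator (fun t => N ^ Q * ENNReal.ofReal t ^ (a - 1)) t := by
    intro t (ht : 0 < t)
    set x := ENNReal.ofReal t
    have hx0 : x ≠ 0 := (ENNReal.ofReal_pos.mpr ht).ne'
    rcases le_or_gt t m.toReal with htm | htm
    · rw [indicator_of_mem (show t ∈ Ioc 0 m.toReal from ⟨ht, htm⟩)]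
      calc (x ^ r * rearr μ f x) ^ Q / x ≤ (N * x ^ (r - 1)) ^ Q / x := by
            gcongr ?_ ^ Q / x; exact rpow_mul_rearr_le μ hf r hx0 ofReal_ne_top
        _ = N ^ Q * x ^ (a - 1) := by
            rw [ENNReal.mul_rpow_of_nonneg _ _ hQ.le, ← ENNReal.rpow_mul,
              ENNReal.rpow_sub _ _ hx0 ofReal_ne_top, ENNReal.rpow_one, mul_div_assoc]
    · have hmx : m ≤ x := by rw [ENNReal.le_ofReal_iff_toReal_le hm ht.le]; exact htm.le
      rw [rearr_eq_zero_of_distFn_zero_le μ hmx, mul_zero, ENNReal.zero_rpow_of_pos hQ,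
        ENNReal.zero_div]
      exact zero_le
  have hmodel : ENNReal.ofReal (m.toReal ^ a / a) = m ^ a * ENNReal.ofReal (1 / a) := by
    rw [div_eq_mul_one_div, ENNReal.ofReal_mul (by positivity),
      ← ENNReal.ofReal_rpow_of_nonneg hT ha.le, ENNReal.ofReal_toReal hm]
  rw [lorentzNorm, if_neg hq, show (q⁻¹).toReal = Q⁻¹ from ENNReal.toReal_inv q]
  calc (∫⁻ t in Ioi 0, (ENNReal.ofReal t ^ r * rearr μ f (ENNReal.ofReal t)) ^ Q
          / ENNReal.ofReal t) ^ Q⁻¹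
      ≤ (∫⁻ t in Ioi 0, (Ioc 0 m.toReal).indicator
          (fun t => N ^ Q * ENNReal.ofReal t ^ (a - 1)) t) ^ Q⁻¹ := by
        gcongr ?_ ^ _
        exact setLIntegral_mono' measurableSet_Ioi hbound
    _ = (N ^ Q * (m ^ a * ENNReal.ofReal (1 / a))) ^ Q⁻¹ := by
        rw [setLIntegral_indicator measurableSet_Ioc, inter_eq_left.mpr Ioc_subset_Ioi_self,
          lintegral_const_mul _ (by fun_prop), lintegral_Ioc_ofReal_rpow_sub_one ha hT,
          hmodel]
    _ = ENNReal.ofReal (1 / a) ^ Q⁻¹ * (N * m ^ (r - 1)) := by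
        have hQQ : Q * Q⁻¹ = 1 := mul_inv_cancel₀ hQ.ne'
        have haQ : a * Q⁻¹ = r - 1 := by rw [mul_assoc, hQQ, mul_one]
        rw [ENNReal.mul_rpow_of_nonneg _ _ (by positivity),
          ENNReal.mul_rpow_of_nonneg _ _ (by positivity), ← ENNReal.rpow_mul,
          ← ENNReal.rpow_mul, hQQ, haQ, ENNReal.rpow_one]
        ring

end Lorentz

theorem exists_lorentzNorm_le (μ : Measure R) {p q : ℝ≥0∞} (hp0 : 0 < p) (hp1 : p < 1)
    (hq : 0 < q) :
    ∃ C ≠ ⊤, ∀ f : R → ℝ, Measurable f → distFn μ f 0 ≠ ⊤ →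
      lorentzNorm μ p q f ≤
        C * ((∫⁻ x, ENNReal.ofReal |f x| ∂μ) * distFn μ f 0 ^ ((p⁻¹).toReal - 1)) := by
  rcases eq_or_ne q ⊤ with rfl | hqtop
  · refine ⟨1, one_ne_top, fun f hf _ => ?_⟩
    rw [one_mul]
    exact lorentzNorm_top_le μ hf hp0 hp1.le
  · exact ⟨_, by finiteness, fun f hf hm => lorentzNorm_le_of_ne_top μ hf hp0 hp1 hq hqtop hm⟩

theorem lintegral_ofReal_abs_indicator_le (μ : Measure R) (E : Set R) (f : R → ℝ) :
    ∫⁻ x, ENNReal.ofReal |E.indicator f x| ∂μ ≤ ∫⁻ x, ENNReal.ofReal |f x| ∂μ :=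
  lintegral_mono fun x => by by_cases hx : x ∈ E <;> simp [hx]

theorem distFn_indicator_le (μ : Measure R) (E : Set R) (f : R → ℝ) (lam : ℝ≥0∞) :
    distFn μ (E.indicator f) lam ≤ μ E :=
  measure_mono fun x (hx : lam < _) =>
    by_contra fun hxE => by simp [indicator_of_notMem hxE] at hx

theorem tendsto_measure_of_ae_tendsto_indicator_zero {ι : Type*} (L : Filter ι)
    [L.IsCountablyGenerated] (μ : Measure R) [IsFiniteMeasure μ] {E : ι → Set R}
    (hE : ∀ i, MeasurableSet (E i))
    (h : ∀ᵐ x ∂μ, Tendsto (fun i => (E i).indicator (fun _ => (1 : ℝ)) x) L (nhds 0)) :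
    Tendsto (fun i => μ (E i)) L (nhds 0) := by
  have h' : ∀ᵐ x ∂μ, ∀ᶠ i in L, x ∈ E i ↔ x ∈ (∅ : Set R) := by
    filter_upwards [h] with x hx
    rw [← tendsto_indicator_const_apply_iff_eventually L (1 : ℝ)]
    simpa using hx
  simpa using tendsto_measure_of_ae_tendsto_indicator_of_isFiniteMeasure L .empty hE h'

theorem l1_almost_compact_into_lorentz_general
    {R : Type*} [MeasurableSpace R] (μ : Measure R)
    (hfin : μ Set.univ < ⊤)
    (p q : ℝ≥0∞) (hp0 : 0 < p) (hp1 : p < 1) (hq : 0 < q) :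
    AlmostCompactEmbedding μ (fun f => ∫⁻ x, ENNReal.ofReal |f x| ∂μ)
      (lorentzNorm μ p q) := by
  have : IsFiniteMeasure μ := ⟨hfin⟩
  obtain ⟨C, hC, hbound⟩ := exists_lorentzNorm_le μ hp0 hp1 hq
  have hr : 0 < (p⁻¹).toReal - 1 := sub_pos.mpr (one_lt_toReal_inv hp0 hp1)
  refine ⟨fun f hf hN => ?_, fun E hE hae => ?_⟩
  · refine (hbound f hf (measure_ne_top μ _)).trans_lt ?_
    exact mul_lt_top hC.lt_top (mul_lt_top hN (rpow_lt_top_of_nonneg hr.le (measure_ne_top μ _)))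
  · refine tendsto_of_tendsto_of_tendsto_of_le_of_le tendsto_const_nhds
      ((ENNReal.tendsto_const_mul_rpow_nhds_zero_of_pos hC hr).comp
        (tendsto_measure_of_ae_tendsto_indicator_zero atTop μ hE hae))
      (fun _ => zero_le) fun n => iSup_le fun f => ?_
    calc lorentzNorm μ p q ((E n).indicator f.1)
        ≤ C * (1 * μ (E n) ^ ((p⁻¹).toReal - 1)) := by
          refine (hbound _ (f.2.1.indicator (hE n)) (measure_ne_top μ _)).trans ?_
          gcongr
          · exact (lintegral_ofReal_abs_indicator_le μ _ _).trans f.2.2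
          · exact distFn_indicator_le μ _ _ _
      _ = C * μ (E n) ^ ((p⁻¹).toReal - 1) := by rw [one_mul]

/-- On a non-atomic finite measure space of positive measure,
for any `p ∈ (0,1)` and `q ∈ (0,∞]`, the almost-compact embedding `L¹ ↪* L^{p,q}` holds. -/
theorem l1_almost_compact_into_lorentz
    {R : Type*} [MeasurableSpace R] (μ : Measure R)
    (hna : NonAtomic μ) (hpos : 0 < μ Set.univ) (hfin : μ Set.univ < ⊤)
    (p q : ℝ≥0∞) (hp0 : 0 < p) (hp1 : p < 1) (hq : 0 < q) :
    AlmostCompactEmbedding μ (fun f => ∫⁻ x, ENNReal.ofReal |f x| ∂μ)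
      (lorentzNorm μ p q) :=
  l1_almost_compact_into_lorentz_general μ hfin p q hp0 hp1 hq
end
end
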